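/- Let k be an algebraically closed field with char k ≠ 2, n ≥ 2 and a ≥ 2 natural numbers, and set d₀ = (n²−1)·(a−1), d₁ = n·(a−1) + 1, d₂ = a−1. For a stratum datum (A,C) of type (d₀,d₁,d₂) and B : Fin n → Matrix (Fin d₂) (Fin d₀) k, let M i be the square matrix of size d₂+d₁+d₀ with block form [[0, A i, B i],[0, 0, C i],[0, 0, 0]]. Then: (1) every such triple satisfies Module.finrank k (⨅_i LinearMap.ker (Matrix.mulVecLin (M i))) ≥ a and Module.finrank k (⨅_{i,j} LinearMap.ker (Matrix.mulVecLin (M i * M j))) ≥ a + n·(a−1); and (2) there exists a triple (A,B,C) with Module.finrank k (⨅_i LinearMap.ker (Matrix.mulVecLin (M i))) = a and Module.finrank k (⨅_{i,j} LinearMap.ker (Matrix.mulVecLin (M i * M j))) = a + n·(a−1). -/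

import Mathlib

/-- A stratum datum of type `(d₀, d₁, d₂)` over `k`: families
`A : Fin n → Matrix (Fin d₂) (Fin d₁) k`, `C : Fin n → Matrix (Fin d₁) (Fin d₀) k`
with `∑ᵢ Aᵢ Cᵢ = 0`, the images of the `Cᵢ` spanning `k^{d₁}` and the images of
the `Aᵢ` spanning `k^{d₂}`. These correspond to representations of
`𝒜 = k⟨x₁,…,xₙ⟩/((x₁,…,xₙ)³ + (∑ xᵢ²))` with radical layering `(d₀,d₁,d₂)`. -/
def IsStratumDatum (k : Type*) [Field k] {n d₀ d₁ d₂ : ℕ}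
    (A : Fin n → Matrix (Fin d₂) (Fin d₁) k)
    (C : Fin n → Matrix (Fin d₁) (Fin d₀) k) : Prop :=
  (∑ i, A i * C i) = 0 ∧
  (⨆ i, LinearMap.range (Matrix.mulVecLin (C i))) = ⊤ ∧
  (⨆ i, LinearMap.range (Matrix.mulVecLin (A i))) = ⊤

/-- The square matrix of size `d₂ + d₁ + d₀` (indexed by
`Fin d₂ ⊕ Fin d₁ ⊕ Fin d₀`) with block form
`[[0, A i, B i], [0, 0, C i], [0, 0, 0]]`. -/
def blockM {k : Type*} [Field k] {n d₀ d₁ d₂ : ℕ}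
    (A : Fin n → Matrix (Fin d₂) (Fin d₁) k)
    (B : Fin n → Matrix (Fin d₂) (Fin d₀) k)
    (C : Fin n → Matrix (Fin d₁) (Fin d₀) k) (i : Fin n) :
    Matrix (Fin d₂ ⊕ (Fin d₁ ⊕ Fin d₀)) (Fin d₂ ⊕ (Fin d₁ ⊕ Fin d₀)) k :=
  Matrix.fromBlocks 0 (Matrix.fromCols (A i) (B i))
    0 (Matrix.fromBlocks 0 (C i) 0 0)

/-!
The socle always contains the top layer together with the common kernel of the `A i` in the
middle layer, and the second socle contains both upper layers; as the `A i` impose at most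
`n d₂ = d₁ - 1` conditions on the middle layer, this gives the lower bounds. Conversely, when the
products `A i * C j` have no common kernel, no vector with a nonzero bottom component lies in the
second socle, so both socles are exactly these subspaces.

For a generic datum, take the bottom layer to be `𝔰𝔩ₙ ⊗ k^{a-1}` and the middle layer
`kⁿ ⊗ k^{a-1} ⊕ k`, with `A i * C j` reading off the `(j, i)` entry of a trace-zero matrix. Then
`∑ i, A i * C i` is a trace, hence zero, and since a trace-zero matrix is determined by its entries
off one diagonal position, the `A i * C j` have no common kernel. The extra middle vector spans
the common kernel of the `A i`, and one column of `C` reaches it.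
-/

open Matrix LinearMap Module

lemma exists_eq_sumElim {α β γ M : Type*} (x : α ⊕ (β ⊕ γ) → M) :
    ∃ x₂ x₁ x₀, x = Sum.elim x₂ (Sum.elim x₁ x₀) :=
  ⟨_, _, _, by ext (_ | _ | _) <;> rfl⟩

lemma eq_top_of_forall_single_mem {k ι : Type*} [Field k] [Fintype ι] [DecidableEq ι]
    {p : Submodule k (ι → k)} (h : ∀ i, Pi.single i 1 ∈ p) : p = ⊤ := by
  rw [eq_top_iff, ← (Pi.basisFun k ι).span_eq, Submodule.span_le]
  rintro _ ⟨i, rfl⟩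
  simpa using h i

lemma card_sub_le_finrank_iInf_ker {k ι m l : Type*} [Field k] [Fintype ι] [Fintype m]
    [Fintype l] (A : ι → Matrix m l k) :
    Fintype.card l - Fintype.card ι * Fintype.card m ≤
      finrank k ↥(⨅ i, ker (mulVecLin (A i))) := by
  rw [← ker_pi]
  have hrank := finrank_range_add_finrank_ker (pi fun i ↦ mulVecLin (A i))
  have hrange := (range (pi fun i ↦ mulVecLin (A i))).finrank_le
  simp only [finrank_fintype_fun_eq_card, finrank_pi_fintype, Finset.sum_const,
    Finset.card_univ, smul_eq_mul] at hrank hrange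
  omega

section Socles

variable {k : Type*} [Field k] {n d₀ d₁ d₂ : ℕ}
  (A : Fin n → Matrix (Fin d₂) (Fin d₁) k) (B : Fin n → Matrix (Fin d₂) (Fin d₀) k)
  (C : Fin n → Matrix (Fin d₁) (Fin d₀) k)

def socle : Submodule k (Fin d₂ ⊕ (Fin d₁ ⊕ Fin d₀) → k) :=
  ⨅ i, ker (mulVecLin (blockM A B C i))

def secondSocle : Submodule k (Fin d₂ ⊕ (Fin d₁ ⊕ Fin d₀) → k) :=
  ⨅ p : Fin n × Fin n, ker (mulVecLin (blockM A B C p.1 * blockM A B C p.2))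

lemma blockM_mulVec (i : Fin n) (x₂ : Fin d₂ → k) (x₁ : Fin d₁ → k) (x₀ : Fin d₀ → k) :
    blockM A B C i *ᵥ Sum.elim x₂ (Sum.elim x₁ x₀) =
      Sum.elim (A i *ᵥ x₁ + B i *ᵥ x₀) (Sum.elim (C i *ᵥ x₀) 0) := by
  simp [blockM, fromBlocks_mulVec, fromCols_mulVec]

lemma sumElim_mem_socle_iff (x₂ : Fin d₂ → k) (x₁ : Fin d₁ → k) (x₀ : Fin d₀ → k) :
    Sum.elim x₂ (Sum.elim x₁ x₀) ∈ socle A B C ↔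
      ∀ i, A i *ᵥ x₁ + B i *ᵥ x₀ = 0 ∧ C i *ᵥ x₀ = 0 := by
  simp [socle, blockM_mulVec, ← Sum.elim_zero_zero, Sum.elim_eq_iff]

lemma sumElim_mem_secondSocle_iff (x₂ : Fin d₂ → k) (x₁ : Fin d₁ → k) (x₀ : Fin d₀ → k) :
    Sum.elim x₂ (Sum.elim x₁ x₀) ∈ secondSocle A B C ↔ ∀ i j, A i *ᵥ (C j *ᵥ x₀) = 0 := by
  simp [secondSocle, blockM_mulVec, ← Sum.elim_zero_zero, Sum.elim_eq_iff]

variable (k d₀ d₁ d₂) in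
def upperLayersEmb : (Fin d₂ → k) × (Fin d₁ → k) →ₗ[k] (Fin d₂ ⊕ (Fin d₁ ⊕ Fin d₀) → k) where
  toFun x := Sum.elim x.1 (Sum.elim x.2 0)
  map_add' x y := by ext (_ | _ | _) <;> simp
  map_smul' c x := by ext (_ | _ | _) <;> simp

lemma upperLayersEmb_injective : Function.Injective (upperLayersEmb k d₀ d₁ d₂) := by
  rintro ⟨_, _⟩ ⟨_, _⟩ h
  simpa [upperLayersEmb, Sum.elim_eq_iff] using h

variable (d₀ d₂) in
def upperLayers (K : Submodule k (Fin d₁ → k)) :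
    Submodule k (Fin d₂ ⊕ (Fin d₁ ⊕ Fin d₀) → k) :=
  range (upperLayersEmb k d₀ d₁ d₂ ∘ₗ LinearMap.id.prodMap K.subtype)

lemma sumElim_mem_upperLayers_iff (K : Submodule k (Fin d₁ → k))
    (x₂ : Fin d₂ → k) (x₁ : Fin d₁ → k) (x₀ : Fin d₀ → k) :
    Sum.elim x₂ (Sum.elim x₁ x₀) ∈ upperLayers d₀ d₂ K ↔ x₁ ∈ K ∧ x₀ = 0 := by
  constructor
  · rintro ⟨⟨u, w⟩, h⟩
    simp only [upperLayersEmb, coe_comp, LinearMap.coe_mk, AddHom.coe_mk, Function.comp_apply,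
      prodMap_apply, id_coe, id_eq, Submodule.subtype_apply, Sum.elim_eq_iff] at h
    obtain ⟨-, rfl, rfl⟩ := h
    exact ⟨w.2, rfl⟩
  · rintro ⟨hx₁, rfl⟩
    exact ⟨(x₂, ⟨x₁, hx₁⟩), rfl⟩

lemma finrank_upperLayers (K : Submodule k (Fin d₁ → k)) :
    finrank k (upperLayers d₀ d₂ K) = d₂ + finrank k K := by
  rw [upperLayers, finrank_range_of_inj, finrank_prod, finrank_fin_fun]
  exact upperLayersEmb_injective.comp (Function.injective_id.prodMap K.injective_subtype)

lemma upperLayers_le_socle : upperLayers d₀ d₂ (⨅ i, ker (mulVecLin (A i))) ≤ socle A B C := by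
  intro x hx
  obtain ⟨x₂, x₁, x₀, rfl⟩ := exists_eq_sumElim x
  obtain ⟨hx₁, rfl⟩ := (sumElim_mem_upperLayers_iff _ _ _ _).1 hx
  simp_all [sumElim_mem_socle_iff]

lemma upperLayers_top_le_secondSocle : upperLayers d₀ d₂ ⊤ ≤ secondSocle A B C := by
  intro x hx
  obtain ⟨x₂, x₁, x₀, rfl⟩ := exists_eq_sumElim x
  obtain ⟨-, rfl⟩ := (sumElim_mem_upperLayers_iff _ _ _ _).1 hx
  simp [sumElim_mem_secondSocle_iff]

lemma le_finrank_socle : d₂ + (d₁ - n * d₂) ≤ finrank k (socle A B C) :=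
  calc d₂ + (d₁ - n * d₂) ≤ d₂ + finrank k ↥(⨅ i, ker (mulVecLin (A i))) := by
        simpa using card_sub_le_finrank_iInf_ker A
    _ = finrank k (upperLayers d₀ d₂ (⨅ i, ker (mulVecLin (A i)))) :=
        (finrank_upperLayers _).symm
    _ ≤ finrank k (socle A B C) := Submodule.finrank_mono (upperLayers_le_socle A B C)

lemma le_finrank_secondSocle : d₂ + d₁ ≤ finrank k (secondSocle A B C) :=
  calc d₂ + d₁ = finrank k (upperLayers d₀ d₂ (⊤ : Submodule k (Fin d₁ → k))) := by
        rw [finrank_upperLayers, finrank_top, finrank_fin_fun]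
    _ ≤ finrank k (secondSocle A B C) :=
        Submodule.finrank_mono (upperLayers_top_le_secondSocle A B C)

variable {A C} (hAC : ⨅ p : Fin n × Fin n, ker (mulVecLin (A p.1 * C p.2)) = ⊥)
include hAC

lemma eq_zero_of_forall_mulVec_mulVec_eq_zero {w : Fin d₀ → k}
    (hw : ∀ i j, A i *ᵥ (C j *ᵥ w) = 0) : w = 0 := by
  rw [← Submodule.mem_bot k, ← hAC]
  simpa [mulVec_mulVec] using hw

lemma socle_eq_upperLayers :
    socle A B C = upperLayers d₀ d₂ (⨅ i, ker (mulVecLin (A i))) := by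
  refine le_antisymm (fun x hx ↦ ?_) (upperLayers_le_socle A B C)
  obtain ⟨x₂, x₁, x₀, rfl⟩ := exists_eq_sumElim x
  rw [sumElim_mem_socle_iff] at hx
  obtain rfl : x₀ = 0 :=
    eq_zero_of_forall_mulVec_mulVec_eq_zero hAC fun i j ↦ by rw [(hx j).2, mulVec_zero]
  simp_all [sumElim_mem_upperLayers_iff]

lemma secondSocle_eq_upperLayers : secondSocle A B C = upperLayers d₀ d₂ ⊤ := by
  refine le_antisymm (fun x hx ↦ ?_) (upperLayers_top_le_secondSocle A B C)
  obtain ⟨x₂, x₁, x₀, rfl⟩ := exists_eq_sumElim x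
  rw [sumElim_mem_secondSocle_iff] at hx
  simp [sumElim_mem_upperLayers_iff, eq_zero_of_forall_mulVec_mulVec_eq_zero hAC hx]

lemma finrank_socle_of_iInf_ker_eq_bot :
    finrank k (socle A B C) = d₂ + finrank k ↥(⨅ i, ker (mulVecLin (A i))) := by
  rw [socle_eq_upperLayers B hAC, finrank_upperLayers]

lemma finrank_secondSocle_of_iInf_ker_eq_bot : finrank k (secondSocle A B C) = d₂ + d₁ := by
  rw [secondSocle_eq_upperLayers B hAC, finrank_upperLayers, finrank_top, finrank_fin_fun]

end Socles

section Reindex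

variable {k : Type*} [Field k] {ι α β α' β' : Type*} [Fintype β] [Fintype β']
  (e₁ : α ≃ α') (e₂ : β ≃ β') (M : ι → Matrix α β k)

lemma iSup_range_mulVecLin_reindex :
    ⨆ i, range (mulVecLin (reindex e₁ e₂ (M i))) =
      (⨆ i, range (mulVecLin (M i))).map
        (LinearEquiv.funCongrLeft k k e₁.symm : (α → k) →ₗ[k] α' → k) := by
  simp only [mulVecLin_reindex, range_comp_of_range_eq_top _ (LinearEquiv.range _),
    range_comp, Submodule.map_iSup]

lemma iInf_ker_mulVecLin_reindex :
    ⨅ i, ker (mulVecLin (reindex e₁ e₂ (M i))) =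
      (⨅ i, ker (mulVecLin (M i))).comap
        (LinearEquiv.funCongrLeft k k e₂ : (β' → k) →ₗ[k] β → k) := by
  simp only [mulVecLin_reindex, LinearEquiv.ker_comp]
  simp only [ker_comp, Submodule.comap_iInf]

lemma finrank_iInf_ker_mulVecLin_reindex :
    finrank k ↥(⨅ i, ker (mulVecLin (reindex e₁ e₂ (M i)))) =
      finrank k ↥(⨅ i, ker (mulVecLin (M i))) := by
  rw [iInf_ker_mulVecLin_reindex, Submodule.comap_equiv_eq_map_symm, LinearEquiv.finrank_map_eq]

end Reindex

lemma isStratumDatum_reindex {k : Type*} [Field k] {n d₀ d₁ d₂ : ℕ} {ι₀ ι₁ ι₂ : Type*}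
    [Fintype ι₀] [Fintype ι₁] [Fintype ι₂] (e₂ : ι₂ ≃ Fin d₂) (e₁ : ι₁ ≃ Fin d₁) (e₀ : ι₀ ≃ Fin d₀)
    {A : Fin n → Matrix ι₂ ι₁ k} {C : Fin n → Matrix ι₁ ι₀ k} (hAC : ∑ i, A i * C i = 0)
    (hC : ⨆ i, range (mulVecLin (C i)) = ⊤) (hA : ⨆ i, range (mulVecLin (A i)) = ⊤) :
    IsStratumDatum k (fun i ↦ reindex e₂ e₁ (A i)) (fun i ↦ reindex e₁ e₀ (C i)) := by
  refine ⟨?_, ?_, ?_⟩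
  · simp_rw [← coe_reindexLinearEquiv k k, reindexLinearEquiv_mul, ← map_sum, hAC, map_zero]
  · rw [iSup_range_mulVecLin_reindex, hC, Submodule.map_top, LinearEquiv.range]
  · rw [iSup_range_mulVecLin_reindex, hA, Submodule.map_top, LinearEquiv.range]

section GenericDatum

variable {k : Type*} [Field k] {ι σ : Type*} [DecidableEq ι]

variable (k) in
/-- The matrices `E_{jl}` (`j ≠ l`) and `E_{jj} - E_{oo}`, a basis of `𝔰𝔩(ι)`. -/
def traceZeroBasis (o : ι) (p : {p : ι × ι // p ≠ (o, o)}) : Matrix ι ι k :=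
  single p.1.1 p.1.2 1 - if p.1.1 = p.1.2 then single o o 1 else 0

lemma traceZeroBasis_apply_of_ne {o j l : ι} (hjl : (j, l) ≠ (o, o))
    (p : {p : ι × ι // p ≠ (o, o)}) :
    traceZeroBasis k o p j l = if p.1 = (j, l) then 1 else 0 := by
  have : ¬(o = j ∧ o = l) := fun h ↦ hjl (by rw [← h.1, ← h.2])
  simp [traceZeroBasis, Matrix.single_apply, apply_ite (fun M : Matrix ι ι k ↦ M j l), this,
    Prod.ext_iff]

variable [Fintype ι] [Fintype σ] [DecidableEq σ]

lemma trace_traceZeroBasis (o : ι) (p : {p : ι × ι // p ≠ (o, o)}) :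
    trace (traceZeroBasis k o p) = 0 := by
  by_cases hp : p.1.1 = p.1.2
  · simp [traceZeroBasis, hp, trace_single_eq_same]
  · simp [traceZeroBasis, hp, trace_single_eq_of_ne]

variable (k σ) in
def genericA (i : ι) : Matrix σ (ι × σ ⊕ Unit) k :=
  of fun s y ↦ if y = Sum.inl (i, s) then 1 else 0

variable (k) in
/-- `C j` sends `(p, s)` to the `j`-th row of `traceZeroBasis k o p` in the copy `s`, plus the
extra middle vector when `(j, p, s) = (o, (o, o'), s₀)`. -/
def genericC (o o' : ι) (s₀ : σ) (j : ι) :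
    Matrix (ι × σ ⊕ Unit) ({p : ι × ι // p ≠ (o, o)} × σ) k :=
  of fun y x ↦ Sum.elim (fun l ↦ if l.2 = x.2 then traceZeroBasis k o x.1 j l.1 else 0)
    (fun _ ↦ if j = o ∧ x.1.1 = (o, o') ∧ x.2 = s₀ then 1 else 0) y

lemma genericA_mulVec (i : ι) (v : ι × σ ⊕ Unit → k) :
    genericA k σ i *ᵥ v = fun s ↦ v (Sum.inl (i, s)) := by
  ext s
  simp [genericA, mulVec, dotProduct]

lemma range_mulVecLin_genericA (i : ι) : range (mulVecLin (genericA k σ i)) = ⊤ :=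
  eq_top_iff.2 fun t _ ↦ ⟨Sum.elim (fun l ↦ t l.2) 0, by simp [genericA_mulVec]⟩

lemma iInf_ker_genericA_le :
    ⨅ i : ι, ker (mulVecLin (genericA k σ i)) ≤ k ∙ Pi.single (Sum.inr ()) 1 := by
  intro v hv
  simp only [Submodule.mem_iInf, mem_ker, mulVecLin_apply, genericA_mulVec, funext_iff] at hv
  refine Submodule.mem_span_singleton.2 ⟨v (Sum.inr ()), ?_⟩
  ext (⟨i, s⟩ | _)
  · simp [hv i s]
  · simp

lemma finrank_iInf_ker_genericA :
    finrank k ↥(⨅ i : ι, ker (mulVecLin (genericA k σ i))) = 1 := by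
  refine le_antisymm ?_ (by simpa using card_sub_le_finrank_iInf_ker (genericA k σ (ι := ι)))
  calc _ ≤ finrank k ↥(k ∙ (Pi.single (Sum.inr ()) 1 : ι × σ ⊕ Unit → k)) :=
        Submodule.finrank_mono iInf_ker_genericA_le
    _ = 1 := finrank_span_singleton (by simp)

variable {o o' : ι} {s₀ : σ}

lemma genericA_mul_genericC_apply (i j : ι) (s : σ) (x : {p : ι × ι // p ≠ (o, o)} × σ) :
    (genericA k σ i * genericC k o o' s₀ j) s x =
      if s = x.2 then traceZeroBasis k o x.1 j i else 0 := by
  simp [genericA, genericC, mul_apply]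

lemma sum_genericA_mul_genericC : ∑ i, genericA k σ i * genericC k o o' s₀ i = 0 := by
  ext s x
  by_cases hs : s = x.2
  · simp only [Matrix.sum_apply, genericA_mul_genericC_apply, hs, if_true, Matrix.zero_apply]
    exact trace_traceZeroBasis o x.1
  · simp [Matrix.sum_apply, genericA_mul_genericC_apply, hs]

lemma genericA_mul_genericC_mulVec (i j : ι) (w : {p : ι × ι // p ≠ (o, o)} × σ → k) :
    (genericA k σ i * genericC k o o' s₀ j) *ᵥ w =
      fun s ↦ ∑ p, traceZeroBasis k o p j i * w (p, s) := by
  ext s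
  simp [mulVec, dotProduct, genericA_mul_genericC_apply, Fintype.sum_prod_type]

lemma iInf_ker_genericA_mul_genericC :
    ⨅ p : ι × ι, ker (mulVecLin (genericA k σ p.1 * genericC k o o' s₀ p.2)) = ⊥ := by
  refine eq_bot_iff.2 fun w hw ↦ ?_
  simp only [Submodule.mem_iInf, mem_ker, mulVecLin_apply] at hw
  ext ⟨q, s⟩
  simpa [genericA_mul_genericC_mulVec, traceZeroBasis_apply_of_ne q.2, ← Subtype.ext_iff]
    using congrFun (hw (q.1.2, q.1.1)) s

lemma genericC_mulVec_single_of_ne {j : ι} (hj : j ≠ o) (l : ι) (t : σ) :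
    genericC k o o' s₀ j *ᵥ Pi.single (⟨(j, l), by simp [hj]⟩, t) 1 =
      Pi.single (Sum.inl (l, t)) 1 := by
  rw [mulVec_single_one]
  ext (⟨l', t'⟩ | _)
  · simp [genericC, traceZeroBasis_apply_of_ne (o := o) (j := j) (l := l') (by simp [hj]),
      Pi.single_apply, eq_comm, ite_and]
    by_cases l = l' <;> simp [*]
  · simp [genericC, hj]

lemma genericC_mulVec_single_self (hoo' : o ≠ o') :
    genericC k o o' s₀ o *ᵥ Pi.single (⟨(o, o'), by simp [hoo'.symm]⟩, s₀) 1 =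
      Pi.single (Sum.inl (o', s₀)) 1 + Pi.single (Sum.inr ()) 1 := by
  rw [mulVec_single_one]
  ext (⟨l', t'⟩ | _)
  · simp [genericC, traceZeroBasis, Matrix.single_apply, Pi.single_apply, hoo', eq_comm, ite_and]
    by_cases o' = l' <;> simp [*]
  · simp [genericC]

lemma iSup_range_mulVecLin_genericC (hoo' : o ≠ o') :
    ⨆ j, range (mulVecLin (genericC k o o' s₀ j)) = ⊤ := by
  set S := ⨆ j, range (mulVecLin (genericC k o o' s₀ j))
  have hcol (j x) : genericC k o o' s₀ j *ᵥ x ∈ S := Submodule.mem_iSup_of_mem j ⟨x, rfl⟩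
  have hinl (l t) : Pi.single (Sum.inl (l, t)) 1 ∈ S :=
    genericC_mulVec_single_of_ne (k := k) (s₀ := s₀) hoo'.symm l t ▸ hcol o' _
  refine eq_top_of_forall_single_mem fun y ↦ ?_
  rcases y with ⟨l, t⟩ | ⟨⟩
  · exact hinl l t
  · have := S.sub_mem (hcol o (Pi.single (⟨(o, o'), by simp [hoo'.symm]⟩, s₀) 1)) (hinl o' s₀)
    rwa [genericC_mulVec_single_self hoo', add_sub_cancel_left] at this

end GenericDatum

theorem exists_generic_isStratumDatum {k : Type*} [Field k] {n m : ℕ} (hn : 2 ≤ n)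
    (hm : 1 ≤ m) :
    ∃ (A : Fin n → Matrix (Fin m) (Fin (n * m + 1)) k)
      (C : Fin n → Matrix (Fin (n * m + 1)) (Fin ((n ^ 2 - 1) * m)) k),
      IsStratumDatum k A C ∧ finrank k ↥(⨅ i, ker (mulVecLin (A i))) = 1 ∧
        ⨅ p : Fin n × Fin n, ker (mulVecLin (A p.1 * C p.2)) = ⊥ := by
  let o : Fin n := ⟨0, by omega⟩
  let o' : Fin n := ⟨1, hn⟩
  have hoo' : o ≠ o' := by simp [o, o', Fin.ext_iff]
  let s₀ : Fin m := ⟨0, hm⟩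
  let e₁ : Fin n × Fin m ⊕ Unit ≃ Fin (n * m + 1) := Fintype.equivFinOfCardEq (by simp)
  let e₀ : {p : Fin n × Fin n // p ≠ (o, o)} × Fin m ≃ Fin ((n ^ 2 - 1) * m) :=
    Fintype.equivFinOfCardEq (by simp [sq])
  refine ⟨fun i ↦ reindex (Equiv.refl _) e₁ (genericA k (Fin m) i),
    fun j ↦ reindex e₁ e₀ (genericC k o o' s₀ j), ?_, ?_, ?_⟩
  · refine isStratumDatum_reindex _ _ _ sum_genericA_mul_genericC
      (iSup_range_mulVecLin_genericC hoo') (eq_top_iff.2 ?_)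
    rw [← range_mulVecLin_genericA o]
    exact le_iSup (fun i ↦ range (mulVecLin (genericA k (Fin m) i))) o
  · rw [finrank_iInf_ker_mulVecLin_reindex, finrank_iInf_ker_genericA]
  · simp_rw [← coe_reindexLinearEquiv k k, reindexLinearEquiv_mul, coe_reindexLinearEquiv]
    rw [iInf_ker_mulVecLin_reindex _ _
        (fun p : Fin n × Fin n ↦ genericA k (Fin m) p.1 * genericC k o o' s₀ p.2),
      iInf_ker_genericA_mul_genericC, Submodule.comap_bot, LinearEquiv.ker]

theorem stmt17_general (k : Type*) [Field k]
    (n : ℕ) (hn : 2 ≤ n) (a : ℕ) (ha : 2 ≤ a)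
    (d₀ d₁ d₂ : ℕ) (hd₀ : d₀ = (n ^ 2 - 1) * (a - 1))
    (hd₁ : d₁ = n * (a - 1) + 1) (hd₂ : d₂ = a - 1) :
    (∀ (A : Fin n → Matrix (Fin d₂) (Fin d₁) k)
       (B : Fin n → Matrix (Fin d₂) (Fin d₀) k)
       (C : Fin n → Matrix (Fin d₁) (Fin d₀) k), IsStratumDatum k A C →
        a ≤ Module.finrank k
            ↥(⨅ i, LinearMap.ker (Matrix.mulVecLin (blockM A B C i))) ∧
        a + n * (a - 1) ≤
          Module.finrank k
            ↥(⨅ p : Fin n × Fin n,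
              LinearMap.ker
                (Matrix.mulVecLin (blockM A B C p.1 * blockM A B C p.2)))) ∧
    (∃ (A : Fin n → Matrix (Fin d₂) (Fin d₁) k)
       (B : Fin n → Matrix (Fin d₂) (Fin d₀) k)
       (C : Fin n → Matrix (Fin d₁) (Fin d₀) k), IsStratumDatum k A C ∧
        Module.finrank k
            ↥(⨅ i, LinearMap.ker (Matrix.mulVecLin (blockM A B C i))) = a ∧
        Module.finrank k
            ↥(⨅ p : Fin n × Fin n,
              LinearMap.ker
                (Matrix.mulVecLin (blockM A B C p.1 * blockM A B C p.2))) =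
          a + n * (a - 1)) := by
  subst hd₀ hd₁ hd₂
  refine ⟨fun A B C _ ↦ ⟨?_, ?_⟩, ?_⟩
  · exact le_trans (by omega) (le_finrank_socle A B C)
  · exact le_trans (by omega) (le_finrank_secondSocle A B C)
  obtain ⟨A, C, hdatum, hker, hAC⟩ :=
    exists_generic_isStratumDatum (k := k) hn (m := a - 1) (by omega)
  refine ⟨A, 0, C, hdatum, ?_, ?_⟩
  · rw [← socle, finrank_socle_of_iInf_ker_eq_bot 0 hAC, hker]
    omega
  · rw [← secondSocle, finrank_secondSocle_of_iInf_ker_eq_bot 0 hAC]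
    omega

/-- The second exceptional case of Theorem 1.2 of the paper: for the radical
layering `((n²−1)(a−1), n(a−1)+1, a−1)`, every representation has socle of
dimension at least `a` and second socle of dimension at least `a + n(a−1)`,
and both bounds are attained simultaneously; i.e. the generic socle layering
is `(a, n(a−1), (n²−1)(a−1))`. -/
theorem stmt17 (k : Type*) [Field k] [IsAlgClosed k] (hk : ringChar k ≠ 2)
    (n : ℕ) (hn : 2 ≤ n) (a : ℕ) (ha : 2 ≤ a)
    (d₀ d₁ d₂ : ℕ) (hd₀ : d₀ = (n ^ 2 - 1) * (a - 1))
    (hd₁ : d₁ = n * (a - 1) + 1) (hd₂ : d₂ = a - 1) :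
    (∀ (A : Fin n → Matrix (Fin d₂) (Fin d₁) k)
       (B : Fin n → Matrix (Fin d₂) (Fin d₀) k)
       (C : Fin n → Matrix (Fin d₁) (Fin d₀) k), IsStratumDatum k A C →
        a ≤ Module.finrank k
            ↥(⨅ i, LinearMap.ker (Matrix.mulVecLin (blockM A B C i))) ∧
        a + n * (a - 1) ≤
          Module.finrank k
            ↥(⨅ p : Fin n × Fin n,
              LinearMap.ker
                (Matrix.mulVecLin (blockM A B C p.1 * blockM A B C p.2)))) ∧
    (∃ (A : Fin n → Matrix (Fin d₂) (Fin d₁) k)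
       (B : Fin n → Matrix (Fin d₂) (Fin d₀) k)
       (C : Fin n → Matrix (Fin d₁) (Fin d₀) k), IsStratumDatum k A C ∧
        Module.finrank k
            ↥(⨅ i, LinearMap.ker (Matrix.mulVecLin (blockM A B C i))) = a ∧
        Module.finrank k
            ↥(⨅ p : Fin n × Fin n,
              LinearMap.ker
                (Matrix.mulVecLin (blockM A B C p.1 * blockM A B C p.2))) =
          a + n * (a - 1)) :=
  stmt17_general k n hn a ha d₀ d₁ d₂ hd₀ hd₁ hd₂
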